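/- arXiv:1305.6588 — 2 statements merged into one kernel-verified Lean document; each statement's English description precedes it below -/
import Mathlib

section
/- Let 0 < α < β and p₁, p₂ > 0 with p₁ + p₂ = 1. Then there exists a constant C ≥ 1 such that for all n ≥ 1, C⁻¹·n^{−1/α} ≤ ∫₀¹ x_n(ω) dω ≤ C·n^{−1/α}, where the integral is with respect to Lebesgue measure on [0,1]. -/
noncomputable section

open Real MeasureTheory Set Filter

/-- The LSV map `T_γ` on `[0,1]`: `x(1+2^γ x^γ)` on `[0,1/2]`, `2x-1` on `(1/2,1]`. -/
noncomputable def lsv (γ : ℝ) (x : ℝ) : ℝ :=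
  if x ≤ 1 / 2 then x * (1 + 2 ^ γ * x ^ γ) else 2 * x - 1

/-- The left branch of the LSV map. -/
noncomputable def lsvLeft (γ : ℝ) (x : ℝ) : ℝ := x * (1 + 2 ^ γ * x ^ γ)

/-- The random parameter selection: `α` for `ω ∈ [0,p₁)`, `β` for `ω ∈ [p₁,1]`. -/
noncomputable def sel (α β p₁ : ℝ) (ω : ℝ) : ℝ := if ω < p₁ then α else β

/-- The randomizing map `φ` on `[0,1]`. -/
noncomputable def phiMap (p₁ p₂ : ℝ) (ω : ℝ) : ℝ :=
  if ω < p₁ then ω / p₁ else (ω - p₁) / p₂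

/-- The skew product `S(x,ω) = (T_{α(ω)}(x), φ(ω))`. -/
noncomputable def skew (α β p₁ p₂ : ℝ) (z : ℝ × ℝ) : ℝ × ℝ :=
  (lsv (sel α β p₁ z.2) z.1, phiMap p₁ p₂ z.2)

/-- Random iterates: `randIter n ω = T_ω^n = T_{α(φ^{n-1}ω)} ∘ ⋯ ∘ T_{α(ω)}`. -/
noncomputable def randIter (α β p₁ p₂ : ℝ) : ℕ → ℝ → ℝ → ℝ
  | 0, _, x => x
  | n + 1, ω, x => randIter α β p₁ p₂ n (phiMap p₁ p₂ ω) (lsv (sel α β p₁ ω) x)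

/-- The deterministic backward orbit `x_n^γ`: `x₀^γ = 1`, `x₁^γ = 1/2`, and for `n ≥ 2`,
`x_n^γ` is the (unique) point of `(0,1/2]` with `T_γ(x_n^γ) = x_{n-1}^γ`. -/
def IsDetBackOrbit (γ : ℝ) (x : ℕ → ℝ) : Prop :=
  x 0 = 1 ∧ x 1 = 1 / 2 ∧
    ∀ n, 2 ≤ n → x n ∈ Set.Ioc (0 : ℝ) (1 / 2) ∧ lsv γ (x n) = x (n - 1)

/-- The random backward orbit `x_n(ω)`: `x₀(ω) = 1`, `x₁(ω) = 1/2`, and for `n ≥ 2`,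
`x_n(ω)` is the (unique) point of `(0,1/2]` with `T_{α(ω)}(x_n(ω)) = x_{n-1}(φω)`. -/
def IsRandBackOrbit (α β p₁ p₂ : ℝ) (X : ℕ → ℝ → ℝ) : Prop :=
  (∀ ω, X 0 ω = 1) ∧ (∀ ω, X 1 ω = 1 / 2) ∧
    ∀ n, 2 ≤ n → ∀ ω, X n ω ∈ Set.Ioc (0 : ℝ) (1 / 2) ∧
      lsv (sel α β p₁ ω) (X n ω) = X (n - 1) (phiMap p₁ p₂ ω)

/-- The points `x'_n(ω)`: `x'₀(ω) = 1`, `x'₁(ω) = 3/4`, and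
`x'_n(ω) = (x_n(φω) + 1)/2` for `n ≥ 2`. -/
def IsRandBackOrbitPrime (p₁ p₂ : ℝ) (X X' : ℕ → ℝ → ℝ) : Prop :=
  (∀ ω, X' 0 ω = 1) ∧ (∀ ω, X' 1 ω = 3 / 4) ∧
    ∀ n, 2 ≤ n → ∀ ω, X' n ω = (X n (phiMap p₁ p₂ ω) + 1) / 2

/-- First return time of `(x,ω)` to `(1/2,1] × [0,1]` under the skew product. -/
noncomputable def returnTime (α β p₁ p₂ : ℝ) (x ω : ℝ) : ℕ :=
  sInf {k : ℕ | 1 ≤ k ∧ 1 / 2 < randIter α β p₁ p₂ k ω x}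

/-!
Write `v = x^(-α)`. A backward step along the left branch of `T_γ`, `γ ≥ α`, raises `v` by at
most a constant, and a backward step along the left branch of `T_α` raises it by at least a
constant. Hence `x_n(ω)^(-α) ≲ n` for every `ω`, which gives the lower bound, while
`x_n(ω)^(-α) ≳ D_{n-1}(ω)`, the number of visits of the `φ`-orbit of `ω` to `[0, p₁)`. Since `φ`
maps both `[0, p₁)` and `[p₁, 1]` affinely onto `[0, 1]`, under Lebesgue measure these visits are
independent Bernoulli(`p₁`) trials, so `∫ 2^(-D_m) = (1 - p₁/2)^m`; an exponential Markov
inequality then shows that `D_{n-1} ≥ p₁ n / 2` outside a set of exponentially small measure, which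
gives the upper bound.
-/

lemma lsv_eq_lsvLeft {γ x : ℝ} (h : x ≤ 1 / 2) : lsv γ x = lsvLeft γ x := if_pos h

lemma lsvLeft_eq_mul_one_add_rpow {γ x : ℝ} (hx : 0 ≤ x) :
    lsvLeft γ x = x * (1 + (2 * x) ^ γ) := by
  rw [lsvLeft, mul_rpow zero_le_two hx]

lemma le_lsvLeft {γ x : ℝ} (hx : 0 ≤ x) : x ≤ lsvLeft γ x := by
  rw [lsvLeft_eq_mul_one_add_rpow hx]
  nlinarith [rpow_nonneg (mul_nonneg zero_le_two hx) γ]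

lemma lsvLeft_le_two_mul {γ x : ℝ} (hγ : 0 ≤ γ) (hx : x ∈ Icc (0 : ℝ) (1 / 2)) :
    lsvLeft γ x ≤ 2 * x := by
  rw [lsvLeft_eq_mul_one_add_rpow hx.1]
  nlinarith [rpow_le_one (by linarith [hx.1] : 0 ≤ 2 * x) (by linarith [hx.2]) hγ, hx.1]

lemma lsvLeft_strictMonoOn {γ : ℝ} (hγ : 0 < γ) : StrictMonoOn (lsvLeft γ) (Ici 0) := by
  intro a (ha : 0 ≤ a) b (hb : 0 ≤ b) hab
  rw [lsvLeft_eq_mul_one_add_rpow ha, lsvLeft_eq_mul_one_add_rpow hb]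
  have h2a : 0 ≤ (2 * a) ^ γ := rpow_nonneg (by linarith) γ
  have hab' : (2 * a) ^ γ ≤ (2 * b) ^ γ := rpow_le_rpow (by linarith) (by linarith) hγ.le
  nlinarith [mul_le_mul_of_nonneg_left hab' hb]

lemma rpow_neg_eq_rpow_neg_lsvLeft_mul {α γ x : ℝ} (hx : 0 < x) :
    x ^ (-α) = lsvLeft γ x ^ (-α) * (1 + (2 * x) ^ γ) ^ α := by
  have h1 : 0 < 1 + (2 * x) ^ γ := by positivity
  rw [lsvLeft_eq_mul_one_add_rpow hx.le, mul_rpow hx.le h1.le, rpow_neg h1.le, mul_assoc,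
    inv_mul_cancel₀ (rpow_pos_of_pos h1 α).ne', mul_one]

lemma rpow_neg_mul_rpow_two_mul {α x : ℝ} (hx : 0 < x) : x ^ (-α) * (2 * x) ^ α = 2 ^ α := by
  rw [mul_rpow zero_le_two hx.le, rpow_neg hx.le, mul_left_comm,
    inv_mul_cancel₀ (rpow_pos_of_pos hx α).ne', mul_one]

lemma rpow_neg_lsvLeft_le {α γ x : ℝ} (hα : 0 ≤ α) (hx : 0 < x) :
    lsvLeft γ x ^ (-α) ≤ x ^ (-α) :=
  rpow_le_rpow_of_nonpos hx (le_lsvLeft hx.le) (neg_nonpos.mpr hα)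

lemma one_add_min_mul_le_rpow_one_add {α t : ℝ} (hα : 0 < α) (ht : t ∈ Icc (0 : ℝ) 1) :
    1 + min α (2 ^ α - 1) * t ≤ (1 + t) ^ α := by
  obtain ⟨ht0, ht1⟩ := ht
  rcases le_or_gt 1 α with h1 | h1
  · nlinarith [one_add_mul_self_le_rpow_one_add (by linarith : (-1 : ℝ) ≤ t) h1,
      min_le_left α (2 ^ α - 1)]
  · have hcc := (concaveOn_rpow hα.le h1.le).2 (mem_Ici.mpr zero_le_one)
      (mem_Ici.mpr zero_le_two) (sub_nonneg.mpr ht1) ht0 (sub_add_cancel 1 t)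
    simp only [smul_eq_mul, one_rpow] at hcc
    rw [show (1 - t) * 1 + t * 2 = 1 + t by ring] at hcc
    nlinarith [min_le_right α (2 ^ α - 1)]

lemma rpow_one_add_le_one_add_max_mul {α t : ℝ} (hα : 0 < α) (ht : t ∈ Icc (0 : ℝ) 1) :
    (1 + t) ^ α ≤ 1 + max α (2 ^ α - 1) * t := by
  obtain ⟨ht0, ht1⟩ := ht
  rcases le_or_gt α 1 with h1 | h1
  · nlinarith [rpow_one_add_le_one_add_mul_self (by linarith : (-1 : ℝ) ≤ t) hα.le h1,
      le_max_left α (2 ^ α - 1)]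
  · have hcv := (convexOn_rpow h1.le).2 (mem_Ici.mpr zero_le_one)
      (mem_Ici.mpr zero_le_two) (sub_nonneg.mpr ht1) ht0 (sub_add_cancel 1 t)
    simp only [smul_eq_mul, one_rpow] at hcv
    rw [show (1 - t) * 1 + t * 2 = 1 + t by ring] at hcv
    nlinarith [le_max_right α (2 ^ α - 1)]

lemma min_rpow_sub_one_pos {α : ℝ} (hα : 0 < α) : 0 < min α (2 ^ α - 1) :=
  lt_min hα (sub_pos.mpr (one_lt_rpow one_lt_two hα))

lemma rpow_neg_le_rpow_neg_lsvLeft_add {α γ x : ℝ} (hα : 0 < α) (hαγ : α ≤ γ)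
    (hx : x ∈ Ioc (0 : ℝ) (1 / 2)) :
    x ^ (-α) ≤ lsvLeft γ x ^ (-α) + max α (2 ^ α - 1) * 2 ^ α := by
  obtain ⟨hx0, hx1⟩ := hx
  set y := lsvLeft γ x
  set t := (2 * x) ^ α
  have hy0 : 0 ≤ y ^ (-α) := rpow_nonneg (hx0.le.trans (le_lsvLeft hx0.le)) _
  have ht : t ∈ Icc (0 : ℝ) 1 :=
    ⟨rpow_nonneg (by linarith) _, rpow_le_one (by linarith) (by linarith) hα.le⟩
  have hγt : (1 + (2 * x) ^ γ) ^ α ≤ (1 + t) ^ α :=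
    rpow_le_rpow (by positivity)
      (add_le_add_right (rpow_le_rpow_of_exponent_ge (by linarith) (by linarith) hαγ) 1) hα.le
  have hyt : y ^ (-α) * t ≤ 2 ^ α := by
    rw [← rpow_neg_mul_rpow_two_mul hx0 (α := α)]
    exact mul_le_mul_of_nonneg_right (rpow_neg_lsvLeft_le hα.le hx0) ht.1
  have hK : 0 ≤ max α (2 ^ α - 1) := hα.le.trans (le_max_left _ _)
  calc x ^ (-α) = y ^ (-α) * (1 + (2 * x) ^ γ) ^ α := rpow_neg_eq_rpow_neg_lsvLeft_mul hx0
    _ ≤ y ^ (-α) * (1 + max α (2 ^ α - 1) * t) :=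
      mul_le_mul_of_nonneg_left (hγt.trans (rpow_one_add_le_one_add_max_mul hα ht)) hy0
    _ = y ^ (-α) + max α (2 ^ α - 1) * (y ^ (-α) * t) := by ring
    _ ≤ y ^ (-α) + max α (2 ^ α - 1) * 2 ^ α := by gcongr

lemma rpow_neg_lsvLeft_add_le {α x : ℝ} (hα : 0 < α) (hx : x ∈ Ioc (0 : ℝ) (1 / 2)) :
    lsvLeft α x ^ (-α) + min α (2 ^ α - 1) ≤ x ^ (-α) := by
  obtain ⟨hx0, hx1⟩ := hx
  set y := lsvLeft α x
  set t := (2 * x) ^ α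
  have hy : y ∈ Icc x (2 * x) := ⟨le_lsvLeft hx0.le, lsvLeft_le_two_mul hα.le ⟨hx0.le, hx1⟩⟩
  have ht : t ∈ Icc (0 : ℝ) 1 :=
    ⟨rpow_nonneg (by linarith) _, rpow_le_one (by linarith) (by linarith) hα.le⟩
  have hyt : 1 ≤ y ^ (-α) * t := by
    calc (1 : ℝ) = (2 * x) ^ (-α) * t := by
          rw [rpow_neg (by linarith), inv_mul_cancel₀ (rpow_pos_of_pos (by linarith) _).ne']
      _ ≤ y ^ (-α) * t :=
          mul_le_mul_of_nonneg_right (rpow_le_rpow_of_nonpos (hx0.trans_le hy.1) hy.2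
            (neg_nonpos.mpr hα.le)) ht.1
  have hc := (min_rpow_sub_one_pos hα).le
  have hy0 : 0 ≤ y ^ (-α) := rpow_nonneg (hx0.trans_le hy.1).le _
  calc y ^ (-α) + min α (2 ^ α - 1) ≤ y ^ (-α) + min α (2 ^ α - 1) * (y ^ (-α) * t) := by
        nlinarith
    _ = y ^ (-α) * (1 + min α (2 ^ α - 1) * t) := by ring
    _ ≤ y ^ (-α) * (1 + t) ^ α :=
      mul_le_mul_of_nonneg_left (one_add_min_mul_le_rpow_one_add hα ht) hy0
    _ = x ^ (-α) := (rpow_neg_eq_rpow_neg_lsvLeft_mul hx0).symm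

/-- A monotone, hence measurable, left inverse of `lsvLeft γ` on `(0, 1/2]`. -/
def lsvLeftInv (γ y : ℝ) : ℝ := sSup (insert 0 {x | x ∈ Icc (0 : ℝ) (1 / 2) ∧ lsvLeft γ x ≤ y})

lemma bddAbove_lsvLeftInv_set (γ y : ℝ) :
    BddAbove (insert 0 {x | x ∈ Icc (0 : ℝ) (1 / 2) ∧ lsvLeft γ x ≤ y}) :=
  ⟨1 / 2, by rintro z (rfl | ⟨hz, -⟩) <;> [norm_num; exact hz.2]⟩

lemma lsvLeftInv_monotone (γ : ℝ) : Monotone (lsvLeftInv γ) := fun _ _ hyy' =>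
  csSup_le_csSup (bddAbove_lsvLeftInv_set _ _) (insert_nonempty _ _)
    (insert_subset_insert fun _ ⟨hz, hzy⟩ => ⟨hz, hzy.trans hyy'⟩)

lemma lsvLeftInv_lsvLeft {γ x : ℝ} (hγ : 0 < γ) (hx : x ∈ Ioc (0 : ℝ) (1 / 2)) :
    lsvLeftInv γ (lsvLeft γ x) = x := by
  refine le_antisymm (csSup_le (insert_nonempty _ _) ?_)
    (le_csSup (bddAbove_lsvLeftInv_set _ _) (mem_insert_of_mem _ ⟨Ioc_subset_Icc_self hx, le_rfl⟩))
  rintro z (rfl | ⟨hz, hzx⟩)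
  · exact hx.1.le
  · exact ((lsvLeft_strictMonoOn hγ).le_iff_le hz.1 hx.1.le).1 hzx

lemma measurable_phiMap (p₁ p₂ : ℝ) : Measurable (phiMap p₁ p₂) :=
  Measurable.ite measurableSet_Iio (measurable_id.div_const _)
    ((measurable_id.sub_const _).div_const _)

lemma setIntegral_Ico_comp_phiMap {p₁ : ℝ} (p₂ : ℝ) (hp₁ : 0 < p₁) (f : ℝ → ℝ) :
    ∫ ω in Ico 0 p₁, f (phiMap p₁ p₂ ω) = p₁ * ∫ ω in Icc 0 1, f ω := by
  rw [setIntegral_congr_fun measurableSet_Ico (g := fun ω => f (ω / p₁))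
      fun ω hω => by simp only [phiMap, if_pos hω.2],
    integral_Ico_eq_integral_Ioo, ← integral_Ioc_eq_integral_Ioo,
    ← intervalIntegral.integral_of_le hp₁.le, intervalIntegral.integral_comp_div f hp₁.ne',
    zero_div, div_self hp₁.ne', smul_eq_mul, intervalIntegral.integral_of_le zero_le_one,
    integral_Icc_eq_integral_Ioc]

lemma setIntegral_Icc_comp_phiMap {p₁ p₂ : ℝ} (hp₂ : 0 < p₂) (hp : p₁ + p₂ = 1) (f : ℝ → ℝ) :
    ∫ ω in Icc p₁ 1, f (phiMap p₁ p₂ ω) = p₂ * ∫ ω in Icc 0 1, f ω := by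
  rw [setIntegral_congr_fun measurableSet_Icc (g := fun ω => (fun u => f (u / p₂)) (ω - p₁))
      fun ω hω => by simp only [phiMap, if_neg (not_lt.mpr hω.1)],
    integral_Icc_eq_integral_Ioc, ← intervalIntegral.integral_of_le (by linarith),
    intervalIntegral.integral_comp_sub_right (fun u => f (u / p₂)), sub_self,
    show 1 - p₁ = p₂ by linarith,
    intervalIntegral.integral_comp_div f hp₂.ne', zero_div, div_self hp₂.ne', smul_eq_mul,
    intervalIntegral.integral_of_le zero_le_one, integral_Icc_eq_integral_Ioc]

def visitCount (p₁ p₂ : ℝ) : ℕ → ℝ → ℕ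
  | 0, _ => 0
  | m + 1, ω => (if ω < p₁ then 1 else 0) + visitCount p₁ p₂ m (phiMap p₁ p₂ ω)

lemma measurable_visitCount (p₁ p₂ : ℝ) : ∀ m, Measurable (visitCount p₁ p₂ m)
  | 0 => measurable_const
  | m + 1 => (Measurable.ite measurableSet_Iio measurable_const measurable_const).add
      ((measurable_visitCount p₁ p₂ m).comp (measurable_phiMap p₁ p₂))

lemma integrableOn_pow_visitCount (p₁ p₂ : ℝ) {r : ℝ} (hr : |r| ≤ 1) (m : ℕ) {s : Set ℝ}
    (hs : volume s ≠ ⊤) : IntegrableOn (fun ω => r ^ visitCount p₁ p₂ m ω) s :=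
  Measure.integrableOn_of_bounded hs
    (measurable_const.pow (measurable_visitCount p₁ p₂ m)).aestronglyMeasurable
    (M := 1) (ae_of_all _ fun ω => by rw [norm_pow]; exact pow_le_one₀ (norm_nonneg r) hr)

lemma integral_pow_visitCount {p₁ p₂ : ℝ} (hp₁ : 0 < p₁) (hp₂ : 0 < p₂) (hp : p₁ + p₂ = 1)
    {r : ℝ} (hr : |r| ≤ 1) (m : ℕ) :
    ∫ ω in Icc 0 1, r ^ visitCount p₁ p₂ m ω = (p₁ * r + p₂) ^ m := by
  induction m with
  | zero => simp [visitCount]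
  | succ m ih =>
    have hint := fun {s : Set ℝ} (hs : volume s ≠ ⊤) =>
      integrableOn_pow_visitCount p₁ p₂ hr (m + 1) hs
    rw [← Ico_union_Icc_eq_Icc hp₁.le (by linarith : p₁ ≤ 1),
      setIntegral_union (disjoint_left.mpr fun _ ha hb => (not_le.mpr ha.2) hb.1) measurableSet_Icc
        (hint measure_Ico_lt_top.ne) (hint measure_Icc_lt_top.ne),
      setIntegral_congr_fun measurableSet_Ico
        (g := fun ω => r * r ^ visitCount p₁ p₂ m (phiMap p₁ p₂ ω))
        fun ω hω => by simp only [visitCount, if_pos hω.2, pow_add, pow_one],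
      setIntegral_congr_fun measurableSet_Icc
        (g := fun ω => r ^ visitCount p₁ p₂ m (phiMap p₁ p₂ ω))
        fun ω hω => by simp only [visitCount, if_neg (not_lt.mpr hω.1), zero_add],
      integral_const_mul, setIntegral_Ico_comp_phiMap p₂ hp₁ (fun u => r ^ visitCount p₁ p₂ m u),
      setIntegral_Icc_comp_phiMap hp₂ hp (fun u => r ^ visitCount p₁ p₂ m u), ih, pow_succ]
    ring

lemma le_sel {α β : ℝ} (hαβ : α ≤ β) (p₁ ω : ℝ) : α ≤ sel α β p₁ ω := by
  unfold sel; split_ifs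
  exacts [le_rfl, hαβ]

/-- Pointwise exponential Markov bound: if `k ≥ s` the hypothesis gives `x ≤ (c s)^(-1/α)`,
and if `k < s` then `2^s (1/2)^k = 2^(s-k) ≥ 1 ≥ x`. -/
lemma le_rpow_add_two_rpow_mul_half_pow {α c s x : ℝ} {k : ℕ} (hα : 0 < α) (hc : 0 < c)
    (hs : 0 < s) (hx : x ∈ Ioc (0 : ℝ) 1) (h : c * k ≤ x ^ (-α)) :
    x ≤ (c * s) ^ (-(1 / α)) + 2 ^ s * (1 / 2) ^ k := by
  have hA : 0 ≤ (c * s) ^ (-(1 / α)) := rpow_nonneg (by positivity) _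
  rcases le_or_gt s k with hk | hk
  · have hcs : c * s ≤ x ^ (-α) := (mul_le_mul_of_nonneg_left hk hc.le).trans h
    have hx' := (le_rpow_inv_iff_of_neg hx.1 (by positivity) (neg_lt_zero.mpr hα)).2 hcs
    rw [inv_neg, ← one_div] at hx'
    linarith [show (0 : ℝ) ≤ 2 ^ s * (1 / 2) ^ k by positivity]
  · have h1 : 1 ≤ 2 ^ s * (1 / 2 : ℝ) ^ k := by
      rw [one_div, inv_pow, ← rpow_natCast, ← rpow_neg zero_le_two, ← rpow_add two_pos]
      exact one_le_rpow one_le_two (by linarith)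
    linarith [hx.2]

lemma two_rpow_mul_one_sub_lt_one {t : ℝ} (ht0 : 0 < t) (ht1 : t ≤ 1) : 2 ^ t * (1 - t) < 1 := by
  have h2t : (2 : ℝ) ^ t ≤ 1 + t := by
    simpa [one_add_one_eq_two, mul_one] using
      rpow_one_add_le_one_add_mul_self (by norm_num : (-1 : ℝ) ≤ 1) ht0.le ht1
  nlinarith [mul_le_mul_of_nonneg_right h2t (sub_nonneg.mpr ht1)]

lemma exists_pow_le_mul_rpow_neg {q : ℝ} (hq0 : 0 ≤ q) (hq1 : q < 1) (s : ℝ) :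
    ∃ C, ∀ n : ℕ, 1 ≤ n → q ^ n ≤ C * (n : ℝ) ^ (-s) := by
  have hsum := summable_pow_mul_geometric_of_norm_lt_one ⌈s⌉₊ (by rwa [norm_of_nonneg hq0])
  refine ⟨∑' j : ℕ, (j : ℝ) ^ ⌈s⌉₊ * q ^ j, fun n hn => ?_⟩
  have hn' : (1 : ℝ) ≤ n := by exact_mod_cast hn
  have hns : (n : ℝ) ^ s ≤ (n : ℝ) ^ ⌈s⌉₊ := by
    rw [← rpow_natCast]; exact rpow_le_rpow_of_exponent_le hn' (Nat.le_ceil s)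
  rw [rpow_neg (by positivity), ← div_eq_mul_inv, le_div_iff₀ (by positivity)]
  calc q ^ n * (n : ℝ) ^ s ≤ (n : ℝ) ^ ⌈s⌉₊ * q ^ n := by
        rw [mul_comm]; exact mul_le_mul_of_nonneg_right hns (by positivity)
    _ ≤ _ := hsum.le_tsum n fun j _ => by positivity

lemma exists_one_le_inv_mul_le_and_le_mul {ι : Type*} {P : ι → Prop} {f g : ι → ℝ}
    (hg : ∀ i, 0 ≤ g i) (hlow : ∃ c > 0, ∀ i, P i → c * g i ≤ f i)
    (hup : ∃ C, ∀ i, P i → f i ≤ C * g i) :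
    ∃ C, 1 ≤ C ∧ ∀ i, P i → C⁻¹ * g i ≤ f i ∧ f i ≤ C * g i := by
  obtain ⟨c, hc, hcf⟩ := hlow
  obtain ⟨C, hfC⟩ := hup
  refine ⟨max c⁻¹ (max C 1), le_max_of_le_right (le_max_right _ _), fun i hi => ⟨?_, ?_⟩⟩
  · exact (mul_le_mul_of_nonneg_right (inv_le_of_inv_le₀ hc (le_max_left _ _)) (hg i)).trans
      (hcf i hi)
  · exact (hfC i hi).trans
      (mul_le_mul_of_nonneg_right (le_max_of_le_right (le_max_left _ _)) (hg i))

namespace IsRandBackOrbit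

variable {α β p₁ p₂ : ℝ} {X : ℕ → ℝ → ℝ}

lemma mem_Ioc (hX : IsRandBackOrbit α β p₁ p₂ X) {n : ℕ} (hn : 1 ≤ n) (ω : ℝ) :
    X n ω ∈ Ioc (0 : ℝ) (1 / 2) := by
  obtain rfl | hn := hn.eq_or_lt
  · rw [hX.2.1 ω]; norm_num
  · exact (hX.2.2 n hn ω).1

lemma lsvLeft_succ (hX : IsRandBackOrbit α β p₁ p₂ X) {n : ℕ} (hn : 1 ≤ n) (ω : ℝ) :
    lsvLeft (sel α β p₁ ω) (X (n + 1) ω) = X n (phiMap p₁ p₂ ω) := by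
  have h := (hX.2.2 (n + 1) (by omega) ω).2
  rwa [lsv_eq_lsvLeft (hX.mem_Ioc (by omega) ω).2, Nat.add_sub_cancel] at h

lemma measurable (hX : IsRandBackOrbit α β p₁ p₂ X) (hα : 0 < α) (hβ : 0 < β) (n : ℕ) :
    Measurable (X n) := by
  cases n with
  | zero => simp [funext hX.1]
  | succ n =>
    induction n with
    | zero => simp [funext hX.2.1]
    | succ n ih =>
      have hrec : X (n + 2) = fun ω => if ω < p₁ then lsvLeftInv α (X (n + 1) (phiMap p₁ p₂ ω))
          else lsvLeftInv β (X (n + 1) (phiMap p₁ p₂ ω)) := by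
        funext ω
        rw [← hX.lsvLeft_succ (by omega) ω]
        unfold sel
        split_ifs
        exacts [(lsvLeftInv_lsvLeft hα (hX.mem_Ioc (by omega) ω)).symm,
          (lsvLeftInv_lsvLeft hβ (hX.mem_Ioc (by omega) ω)).symm]
      have hφ := ih.comp (measurable_phiMap p₁ p₂)
      rw [hrec]
      exact Measurable.ite measurableSet_Iio ((lsvLeftInv_monotone α).measurable.comp hφ)
        ((lsvLeftInv_monotone β).measurable.comp hφ)

lemma integrableOn (hX : IsRandBackOrbit α β p₁ p₂ X) (hα : 0 < α) (hβ : 0 < β) {n : ℕ}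
    (hn : 1 ≤ n) : IntegrableOn (X n) (Icc 0 1) :=
  Measure.integrableOn_of_bounded measure_Icc_lt_top.ne
    (hX.measurable hα hβ n).aestronglyMeasurable (M := 1 / 2)
    (ae_of_all _ fun ω => by
      rw [Real.norm_of_nonneg (hX.mem_Ioc hn ω).1.le]; exact (hX.mem_Ioc hn ω).2)

lemma rpow_neg_le_mul (hX : IsRandBackOrbit α β p₁ p₂ X) (hα : 0 < α) (hαβ : α ≤ β) {n : ℕ}
    (hn : 1 ≤ n) (ω : ℝ) : X n ω ^ (-α) ≤ 2 ^ α * (1 + max α (2 ^ α - 1)) * n := by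
  have hK : 0 ≤ max α (2 ^ α - 1) := hα.le.trans (le_max_left _ _)
  induction n, hn using Nat.le_induction generalizing ω with
  | base =>
    rw [hX.2.1 ω, one_div, inv_rpow zero_le_two, rpow_neg zero_le_two, inv_inv, Nat.cast_one]
    nlinarith [rpow_pos_of_pos two_pos α]
  | succ n hn ih =>
    have hstep := rpow_neg_le_rpow_neg_lsvLeft_add hα (le_sel hαβ p₁ ω)
      (hX.mem_Ioc (n := n + 1) (by omega) ω)
    rw [hX.lsvLeft_succ hn ω] at hstep
    push_cast
    nlinarith [ih (phiMap p₁ p₂ ω), rpow_pos_of_pos two_pos α]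

lemma min_mul_visitCount_le (hX : IsRandBackOrbit α β p₁ p₂ X) (hα : 0 < α) (m : ℕ) (ω : ℝ) :
    min α (2 ^ α - 1) * visitCount p₁ p₂ m ω ≤ X (m + 1) ω ^ (-α) := by
  induction m generalizing ω with
  | zero =>
    simpa [visitCount] using rpow_nonneg (hX.mem_Ioc le_rfl ω).1.le _
  | succ m ih =>
    have hx := hX.mem_Ioc (n := m + 2) (by omega) ω
    have hrec := hX.lsvLeft_succ (n := m + 1) (by omega) ω
    have ih' := ih (phiMap p₁ p₂ ω)
    simp only [visitCount, sel] at hrec ⊢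
    split_ifs at hrec ⊢ with hω
    · have hstep := rpow_neg_lsvLeft_add_le hα hx
      rw [hrec] at hstep
      push_cast
      linarith
    · have hstep := rpow_neg_lsvLeft_le (γ := β) hα.le hx.1
      rw [hrec] at hstep
      simpa using ih'.trans hstep

lemma setIntegral_succ_le (hX : IsRandBackOrbit α β p₁ p₂ X) (hα : 0 < α) (hβ : 0 < β)
    (hp₁ : 0 < p₁) (hp₂ : 0 < p₂) (hp : p₁ + p₂ = 1) (m : ℕ) {s : ℝ} (hs : 0 < s) :
    ∫ ω in Icc 0 1, X (m + 1) ω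
      ≤ (min α (2 ^ α - 1) * s) ^ (-(1 / α)) + 2 ^ s * (1 - p₁ / 2) ^ m := by
  have hc := min_rpow_sub_one_pos hα
  have hhalf : |(1 / 2 : ℝ)| ≤ 1 := by norm_num
  have hconst : IntegrableOn (fun _ => (min α (2 ^ α - 1) * s) ^ (-(1 / α))) (Icc (0 : ℝ) 1) :=
    integrableOn_const measure_Icc_lt_top.ne
  have hpow := (integrableOn_pow_visitCount p₁ p₂ hhalf m
    (measure_Icc_lt_top (a := (0 : ℝ)) (b := 1)).ne).const_mul (2 ^ s)
  calc ∫ ω in Icc 0 1, X (m + 1) ω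
      ≤ ∫ ω in Icc 0 1, ((min α (2 ^ α - 1) * s) ^ (-(1 / α))
          + 2 ^ s * (1 / 2) ^ visitCount p₁ p₂ m ω) :=
        setIntegral_mono_on (hX.integrableOn hα hβ (by omega)) (hconst.add hpow) measurableSet_Icc
          fun ω _ => le_rpow_add_two_rpow_mul_half_pow hα hc hs
            (Ioc_subset_Ioc_right (by norm_num) (hX.mem_Ioc (by omega) ω))
            (hX.min_mul_visitCount_le hα m ω)
    _ = (min α (2 ^ α - 1) * s) ^ (-(1 / α)) + 2 ^ s * (1 - p₁ / 2) ^ m := by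
        rw [integral_add hconst hpow, setIntegral_const, integral_const_mul,
          integral_pow_visitCount hp₁ hp₂ hp hhalf, Real.volume_real_Icc_of_le zero_le_one,
          show p₁ * (1 / 2) + p₂ = 1 - p₁ / 2 by linarith]
        simp

lemma exists_mul_rpow_le_setIntegral (hX : IsRandBackOrbit α β p₁ p₂ X) (hα : 0 < α)
    (hαβ : α ≤ β) :
    ∃ c > 0, ∀ n : ℕ, 1 ≤ n → c * (n : ℝ) ^ (-(1 / α)) ≤ ∫ ω in Icc 0 1, X n ω := by
  set B := 2 ^ α * (1 + max α (2 ^ α - 1))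
  have hB : 0 < B := mul_pos (rpow_pos_of_pos two_pos α) (by linarith [le_max_left α (2 ^ α - 1)])
  refine ⟨B ^ (-(1 / α)), rpow_pos_of_pos hB _, fun n hn => ?_⟩
  have hn' : (0 : ℝ) < n := by exact_mod_cast hn
  have hpt : ∀ ω, B ^ (-(1 / α)) * (n : ℝ) ^ (-(1 / α)) ≤ X n ω := fun ω => by
    rw [← mul_rpow hB.le hn'.le, show -(1 / α) = (-α)⁻¹ by rw [inv_neg, one_div]]
    exact (rpow_inv_le_iff_of_neg (by positivity) (hX.mem_Ioc hn ω).1 (neg_lt_zero.mpr hα)).2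
      (hX.rpow_neg_le_mul hα hαβ hn ω)
  calc B ^ (-(1 / α)) * (n : ℝ) ^ (-(1 / α))
      = ∫ _ in Icc (0 : ℝ) 1, B ^ (-(1 / α)) * (n : ℝ) ^ (-(1 / α)) := by simp
    _ ≤ ∫ ω in Icc 0 1, X n ω :=
      setIntegral_mono_on (integrableOn_const measure_Icc_lt_top.ne)
        (hX.integrableOn hα (hα.trans_le hαβ) hn) measurableSet_Icc fun ω _ => hpt ω

lemma exists_setIntegral_le_mul_rpow (hX : IsRandBackOrbit α β p₁ p₂ X) (hα : 0 < α) (hβ : 0 < β)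
    (hp₁ : 0 < p₁) (hp₂ : 0 < p₂) (hp : p₁ + p₂ = 1) :
    ∃ C, ∀ n : ℕ, 1 ≤ n → ∫ ω in Icc 0 1, X n ω ≤ C * (n : ℝ) ^ (-(1 / α)) := by
  set c := min α (2 ^ α - 1)
  have hc : 0 < c := min_rpow_sub_one_pos hα
  set q := (2 : ℝ) ^ (p₁ / 2) * (1 - p₁ / 2)
  have hr : 0 < 1 - p₁ / 2 := by linarith
  obtain ⟨C, hC⟩ := exists_pow_le_mul_rpow_neg (q := q) (by positivity)
    (two_rpow_mul_one_sub_lt_one (by positivity) (by linarith)) (1 / α)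
  refine ⟨(c * (p₁ / 2)) ^ (-(1 / α)) + C / (1 - p₁ / 2), fun n hn => ?_⟩
  obtain ⟨m, rfl⟩ : ∃ m, n = m + 1 := ⟨n - 1, by omega⟩
  -- Markov threshold: half the expected number `p₁ n` of visits to `[0, p₁)`.
  have h := hX.setIntegral_succ_le hα hβ hp₁ hp₂ hp m (s := p₁ / 2 * ((m + 1 : ℕ) : ℝ))
    (by positivity)
  rw [← mul_assoc, mul_rpow (by positivity) (Nat.cast_nonneg _), rpow_mul_natCast zero_le_two,
    show ((2 : ℝ) ^ (p₁ / 2)) ^ (m + 1) * (1 - p₁ / 2) ^ m = q ^ (m + 1) / (1 - p₁ / 2) by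
      rw [mul_pow, pow_succ (1 - p₁ / 2), ← mul_assoc, mul_div_cancel_right₀ _ hr.ne']] at h
  calc ∫ ω in Icc 0 1, X (m + 1) ω
      ≤ (c * (p₁ / 2)) ^ (-(1 / α)) * ((m + 1 : ℕ) : ℝ) ^ (-(1 / α))
          + q ^ (m + 1) / (1 - p₁ / 2) := h
    _ ≤ (c * (p₁ / 2)) ^ (-(1 / α)) * ((m + 1 : ℕ) : ℝ) ^ (-(1 / α))
          + C * ((m + 1 : ℕ) : ℝ) ^ (-(1 / α)) / (1 - p₁ / 2) := by
        gcongr; exact hC _ hn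
    _ = ((c * (p₁ / 2)) ^ (-(1 / α)) + C / (1 - p₁ / 2)) * ((m + 1 : ℕ) : ℝ) ^ (-(1 / α)) := by
        ring

end IsRandBackOrbit

/-- For `0 < α < β` and `p₁, p₂ > 0` with `p₁ + p₂ = 1`, there is
`C ≥ 1` with `C⁻¹ n^{−1/α} ≤ ∫₀¹ x_n(ω) dω ≤ C n^{−1/α}` for all `n ≥ 1`. -/
theorem expectation_randBackOrbit (α β p₁ p₂ : ℝ) (hα : 0 < α) (hαβ : α < β)
    (hp₁ : 0 < p₁) (hp₂ : 0 < p₂) (hp : p₁ + p₂ = 1)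
    (X : ℕ → ℝ → ℝ) (hX : IsRandBackOrbit α β p₁ p₂ X) :
    ∃ C : ℝ, 1 ≤ C ∧ ∀ n : ℕ, 1 ≤ n →
      C⁻¹ * (n : ℝ) ^ (-(1 / α)) ≤ (∫ ω in Set.Icc (0 : ℝ) 1, X n ω) ∧
      (∫ ω in Set.Icc (0 : ℝ) 1, X n ω) ≤ C * (n : ℝ) ^ (-(1 / α)) :=
  exists_one_le_inv_mul_le_and_le_mul (fun n => rpow_nonneg (Nat.cast_nonneg n) _)
    (hX.exists_mul_rpow_le_setIntegral hα hαβ.le)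
    (hX.exists_setIntegral_le_mul_rpow hα (hα.trans hαβ) hp₁ hp₂ hp)
end
end

section
/- Let 0 < α < β and p₁, p₂ > 0 with p₁ + p₂ = 1. For every n ≥ 1, every ω ∈ [0,1] and all x, y ∈ J_n(ω): |x − y| ≤ (1/2)·|T_ω^n(x) − T_ω^n(y)|; in particular, since T_ω^n maps J_n(ω) into (1/2,1], one has |x − y| ≤ 1/2. (Equivalently, the derivative of the return map T_ω^n on J_n(ω) is at least 2.) -/
noncomputable section

open Real MeasureTheory Set Filter

private lemma sel_pos' {α β p₁ : ℝ} (hα : 0 < α) (hβ : 0 < β) (ω : ℝ) :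
    0 < sel α β p₁ ω := by
  unfold sel; split <;> assumption

private lemma lsvLeft_le {γ : ℝ} (hγ : 0 ≤ γ) {u v : ℝ} (h0 : 0 ≤ u) (huv : u ≤ v) :
    lsvLeft γ u ≤ lsvLeft γ v ∧ v - u ≤ lsvLeft γ v - lsvLeft γ u := by
  have hv0 : 0 ≤ v := le_trans h0 huv
  have h1 : u ^ γ ≤ v ^ γ := Real.rpow_le_rpow h0 huv hγ
  have h2 : (0:ℝ) ≤ u ^ γ := Real.rpow_nonneg h0 γ
  have h3 : u * u ^ γ ≤ v * v ^ γ := mul_le_mul huv h1 h2 hv0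
  have h4 : (0:ℝ) < 2 ^ γ := Real.rpow_pos_of_pos (by norm_num) γ
  have h5 : 2 ^ γ * (u * u ^ γ) ≤ 2 ^ γ * (v * v ^ γ) := by
    exact mul_le_mul_of_nonneg_left h3 h4.le
  constructor <;> (unfold lsvLeft; nlinarith)

private lemma lsv_half (γ : ℝ) : lsv γ (1/2 : ℝ) = 1 := by
  unfold lsv
  rw [if_pos le_rfl]
  have h : (2:ℝ) ^ γ * (1/2 : ℝ) ^ γ = 1 := by
    rw [← Real.mul_rpow (by norm_num) (by norm_num)]
    norm_num
  rw [h]; ring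

private lemma X_mem {α β p₁ p₂ : ℝ} {X : ℕ → ℝ → ℝ} (hX : IsRandBackOrbit α β p₁ p₂ X)
    {k : ℕ} (hk : 1 ≤ k) (ω : ℝ) : X k ω ∈ Set.Ioc (0:ℝ) (1/2) := by
  rcases eq_or_lt_of_le hk with h | h
  · rw [← h, hX.2.1 ω]; norm_num
  · exact (hX.2.2 k h ω).1

private lemma lsv_X {α β p₁ p₂ : ℝ} {X : ℕ → ℝ → ℝ} (hX : IsRandBackOrbit α β p₁ p₂ X)
    {k : ℕ} (hk : 1 ≤ k) (ω : ℝ) :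
    lsv (sel α β p₁ ω) (X k ω) = X (k - 1) (phiMap p₁ p₂ ω) := by
  rcases eq_or_lt_of_le hk with h | h
  · rw [← h, hX.2.1 ω, lsv_half]
    exact (hX.1 _).symm
  · exact (hX.2.2 k h ω).2

private lemma randIter_succ (α β p₁ p₂ : ℝ) (n : ℕ) (ω x : ℝ) :
    randIter α β p₁ p₂ (n+1) ω x
      = randIter α β p₁ p₂ n (phiMap p₁ p₂ ω) (lsv (sel α β p₁ ω) x) := rfl

private lemma key_lemma {α β p₁ p₂ : ℝ} (hα : 0 < α) (hβ : 0 < β)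
    {X : ℕ → ℝ → ℝ} (hX : IsRandBackOrbit α β p₁ p₂ X) :
    ∀ k, 1 ≤ k → ∀ ω u v, u ∈ Set.Ioc (X k ω) (X (k-1) ω) →
      v ∈ Set.Ioc (X k ω) (X (k-1) ω) → u ≤ v →
      randIter α β p₁ p₂ (k-1) ω u ≤ randIter α β p₁ p₂ (k-1) ω v ∧
      v - u ≤ randIter α β p₁ p₂ (k-1) ω v - randIter α β p₁ p₂ (k-1) ω u := by
  intro k hk
  induction k, hk using Nat.le_induction with
  | base =>
    intro ω u v hu hv huv
    simp only [Nat.sub_self]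
    exact ⟨huv, le_rfl⟩
  | succ k hk IH =>
    intro ω u v hu hv huv
    obtain ⟨m, rfl⟩ : ∃ m, k = m + 1 := ⟨k - 1, by omega⟩
    simp only [Nat.add_sub_cancel] at IH ⊢
    set γ := sel α β p₁ ω with hγdef
    have hγ : 0 < γ := sel_pos' hα hβ ω
    have hXk1 : X (m+2) ω ∈ Set.Ioc (0:ℝ) (1/2) := X_mem hX (by omega) ω
    have hXk : X (m+1) ω ∈ Set.Ioc (0:ℝ) (1/2) := X_mem hX (by omega) ω
    obtain ⟨hu1, hu2⟩ := hu
    obtain ⟨hv1, hv2⟩ := hv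
    have hu0 : 0 < u := hXk1.1.trans hu1
    have huh : u ≤ 1/2 := hu2.trans hXk.2
    have hv0 : 0 < v := hXk1.1.trans hv1
    have hvh : v ≤ 1/2 := hv2.trans hXk.2
    have elu : lsv γ u = lsvLeft γ u := by rw [lsv, if_pos huh]; rfl
    have elv : lsv γ v = lsvLeft γ v := by rw [lsv, if_pos hvh]; rfl
    have e1 : lsv γ (X (m+2) ω) = X (m+1) (phiMap p₁ p₂ ω) := by
      have := lsv_X hX (k := m+2) (by omega) ω
      simpa using this
    have e2 : lsv γ (X (m+1) ω) = X m (phiMap p₁ p₂ ω) := by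
      have := lsv_X hX (k := m+1) (by omega) ω
      simpa using this
    have eL1 : lsvLeft γ (X (m+2) ω) = X (m+1) (phiMap p₁ p₂ ω) := by
      rw [← e1, lsv, if_pos hXk1.2]; rfl
    have eL2 : lsvLeft γ (X (m+1) ω) = X m (phiMap p₁ p₂ ω) := by
      rw [← e2, lsv, if_pos hXk.2]; rfl
    have m1 := lsvLeft_le hγ.le hXk1.1.le hu1.le
    have m2 := lsvLeft_le hγ.le hu0.le huv
    have m3u := lsvLeft_le hγ.le hu0.le hu2
    have m3v := lsvLeft_le hγ.le hv0.le hv2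
    have m1v := lsvLeft_le hγ.le hXk1.1.le hv1.le
    have hmu : lsvLeft γ u ∈ Set.Ioc (X (m+1) (phiMap p₁ p₂ ω)) (X m (phiMap p₁ p₂ ω)) := by
      constructor
      · rw [← eL1]; linarith [m1.2]
      · rw [← eL2]; exact m3u.1
    have hmv : lsvLeft γ v ∈ Set.Ioc (X (m+1) (phiMap p₁ p₂ ω)) (X m (phiMap p₁ p₂ ω)) := by
      constructor
      · rw [← eL1]; linarith [m1v.2]
      · rw [← eL2]; exact m3v.1
    have hrec := IH (phiMap p₁ p₂ ω) (lsvLeft γ u) (lsvLeft γ v) hmu hmv m2.1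
    have gu : randIter α β p₁ p₂ (m+1) ω u
        = randIter α β p₁ p₂ m (phiMap p₁ p₂ ω) (lsvLeft γ u) := by
      rw [randIter_succ, ← hγdef, elu]
    have gv : randIter α β p₁ p₂ (m+1) ω v
        = randIter α β p₁ p₂ m (phiMap p₁ p₂ ω) (lsvLeft γ v) := by
      rw [randIter_succ, ← hγdef, elv]
    rw [gu, gv]
    exact ⟨hrec.1, by linarith [m2.2, hrec.2]⟩

/-- For `0 < α < β`, `p₁, p₂ > 0` with `p₁ + p₂ = 1`, `n ≥ 1`,
`ω ∈ [0,1]` and `x, y ∈ J_n(ω)`: `|x − y| ≤ (1/2)|T_ω^n(x) − T_ω^n(y)|`, and in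
particular `|x − y| ≤ 1/2`. -/
theorem return_map_expansion (α β p₁ p₂ : ℝ) (hα : 0 < α) (hαβ : α < β)
    (hp₁ : 0 < p₁) (hp₂ : 0 < p₂) (hp : p₁ + p₂ = 1)
    (X X' : ℕ → ℝ → ℝ) (hX : IsRandBackOrbit α β p₁ p₂ X)
    (hX' : IsRandBackOrbitPrime p₁ p₂ X X')
    (n : ℕ) (hn : 1 ≤ n) (ω : ℝ) (hω : ω ∈ Set.Icc (0 : ℝ) 1) :
    ∀ x ∈ Set.Ioc (X' n ω) (X' (n - 1) ω), ∀ y ∈ Set.Ioc (X' n ω) (X' (n - 1) ω),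
      |x - y| ≤ (1 / 2) * |randIter α β p₁ p₂ n ω x - randIter α β p₁ p₂ n ω y| ∧
      |x - y| ≤ 1 / 2 := by
  obtain ⟨m, rfl⟩ : ∃ m, n = m + 1 := ⟨n - 1, by omega⟩
  simp only [Nat.add_sub_cancel]
  obtain ⟨hP0, hP1, hPn⟩ := hX'
  have hβ : 0 < β := hα.trans hαβ
  -- bounds on X'
  have half : 1/2 ≤ X' (m+1) ω := by
    rcases Nat.eq_zero_or_pos m with hm | hm
    · subst hm; rw [hP1 ω]; norm_num
    · rw [hPn (m+1) (by omega) ω]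
      have := (X_mem hX (k := m+1) (by omega) (phiMap p₁ p₂ ω)).1
      linarith
  have one : X' m ω ≤ 1 := by
    rcases Nat.lt_or_ge m 2 with hm | hm
    · interval_cases m
      · rw [hP0 ω]
      · rw [hP1 ω]; norm_num
    · rw [hPn m hm ω]
      have := (X_mem hX (k := m) (by omega) (phiMap p₁ p₂ ω)).2
      linarith
  -- the ordered claim
  have claim : ∀ x ∈ Set.Ioc (X' (m+1) ω) (X' m ω), ∀ y ∈ Set.Ioc (X' (m+1) ω) (X' m ω),
      x ≤ y → randIter α β p₁ p₂ (m+1) ω x ≤ randIter α β p₁ p₂ (m+1) ω y ∧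
        2*(y-x) ≤ randIter α β p₁ p₂ (m+1) ω y - randIter α β p₁ p₂ (m+1) ω x := by
    intro x hx y hy hxy
    have memb : ∀ z ∈ Set.Ioc (X' (m+1) ω) (X' m ω),
        2*z - 1 ∈ Set.Ioc (X (m+1) (phiMap p₁ p₂ ω)) (X m (phiMap p₁ p₂ ω)) := by
      intro z hz
      constructor
      · rcases Nat.eq_zero_or_pos m with hm | hm
        · subst hm
          rw [hX.2.1]
          have : X' 1 ω = 3/4 := hP1 ω
          have := hz.1
          linarith
        · have he : X' (m+1) ω = (X (m+1) (phiMap p₁ p₂ ω) + 1) / 2 := hPn (m+1) (by omega) ω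
          have := hz.1
          rw [he] at this
          linarith
      · rcases Nat.lt_or_ge m 2 with hm | hm
        · interval_cases m
          · rw [hX.1]
            have : X' 0 ω = 1 := hP0 ω
            have := hz.2
            linarith
          · rw [hX.2.1]
            have : X' 1 ω = 3/4 := hP1 ω
            have := hz.2
            linarith
        · have he : X' m ω = (X m (phiMap p₁ p₂ ω) + 1) / 2 := hPn m hm ω
          have := hz.2
          rw [he] at this
          linarith
    have hxh : 1/2 < x := lt_of_le_of_lt half hx.1
    have hyh : 1/2 < y := lt_of_le_of_lt half hy.1
    have ex : lsv (sel α β p₁ ω) x = 2*x - 1 := by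
      rw [lsv, if_neg (by linarith)]
    have ey : lsv (sel α β p₁ ω) y = 2*y - 1 := by
      rw [lsv, if_neg (by linarith)]
    have hkey := key_lemma hα hβ hX (m+1) (by omega) (phiMap p₁ p₂ ω)
      (2*x-1) (2*y-1) (memb x hx) (memb y hy) (by linarith)
    simp only [Nat.add_sub_cancel] at hkey
    have gx : randIter α β p₁ p₂ (m+1) ω x
        = randIter α β p₁ p₂ m (phiMap p₁ p₂ ω) (2*x-1) := by
      rw [randIter_succ, ex]
    have gy : randIter α β p₁ p₂ (m+1) ω y
        = randIter α β p₁ p₂ m (phiMap p₁ p₂ ω) (2*y-1) := by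
      rw [randIter_succ, ey]
    rw [gx, gy]
    exact ⟨hkey.1, by linarith [hkey.2]⟩
  intro x hx y hy
  have hb : |x - y| ≤ 1/2 := by
    rw [abs_sub_le_iff]
    constructor <;> [skip; skip] <;>
      · have := hx.1; have := hx.2; have := hy.1; have := hy.2; linarith
  refine ⟨?_, hb⟩
  rcases le_total x y with h | h
  · obtain ⟨c1, c2⟩ := claim x hx y hy h
    rw [abs_sub_comm x y, abs_of_nonneg (by linarith), abs_sub_comm, abs_of_nonneg (by linarith)]
    linarith
  · obtain ⟨c1, c2⟩ := claim y hy x hx h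
    rw [abs_of_nonneg (by linarith), abs_of_nonneg (by linarith)]
    linarith
end
end
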